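/- Let r ≥ 5 and let G be a connected simple graph in which the cycle C_r = v1v2⋯v_r v1 is an end-block attached to the rest of the graph at the vertex v1 (so G − {v2, …, v_r} is a connected graph G0 containing v1, and v2, …, v_r have no neighbours outside the cycle). Let G' = G − v_{r−1}v_r − v_2v_3 + v_{r−1}v_1 + v_3v_1 (so the cycle is shortened to v1v3v4⋯v_{r−1}v1 and v2, v_r become pendant neighbours of v1). Then W_e(G') < W_e(G). -/

import Mathlib

open SimpleGraph Finset
open scoped Classical

/-- The distance `d_G(f,g)` between two edges: `0` if they coincide, otherwise the minimum
distance between endpoints plus one (i.e. the distance in the line graph). -/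
noncomputable def eDist {V : Type*} (G : SimpleGraph V) (e f : Sym2 V) : ℕ :=
  if e = f then 0 else sInf {n : ℕ | ∃ u ∈ e, ∃ w ∈ f, G.dist u w = n} + 1

/-- The distance `d_G(v,f)` between a vertex and an edge: the minimum distance to an endpoint. -/
noncomputable def vDist {V : Type*} (G : SimpleGraph V) (v : V) (e : Sym2 V) : ℕ :=
  sInf {n : ℕ | ∃ u ∈ e, G.dist v u = n}

/-- The edge-Wiener index `W_e(G)`: the sum of `eDist` over unordered pairs of edges. -/
noncomputable def edgeWiener {V : Type*} [Fintype V] (G : SimpleGraph V) : ℕ :=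
  (∑ e ∈ G.edgeFinset, ∑ f ∈ G.edgeFinset, eDist G e f) / 2

/-! Collapse `v 1` and `v (r - 1)` onto `v 0`. Every edge of `G` then becomes an edge of `G'`
or the single vertex `v 0`, so the collapse does not increase distances from `G` to `G'`.
Pair the edges by `v1v2 ↦ v0v2`, `v(r-2)v(r-1) ↦ v(r-2)v0` and the identity otherwise: the
collapse sends both endpoints of an edge into its partner, so no edge distance grows. The two
replaced edges are disjoint in `G`, at edge distance at least `2`, while their partners meet at
`v 0`, at edge distance `1`. -/

theorem Finset.sum_add_two_le_sum {ι : Type*} {s : Finset ι} {a b : ι → ℕ}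
    (hle : ∀ i ∈ s, a i ≤ b i) {x y : ι} (hx : x ∈ s) (hy : y ∈ s) (hxy : x ≠ y)
    (hltx : a x < b x) (hlty : a y < b y) :
    ∑ i ∈ s, a i + 2 ≤ ∑ i ∈ s, b i := by
  rw [← add_sum_erase s a hx, ← add_sum_erase s b hx]
  have := sum_lt_sum (s := s.erase x) (fun i hi => hle i (mem_of_mem_erase hi))
    ⟨y, mem_erase.2 ⟨hxy.symm, hy⟩, hlty⟩
  omega

theorem Set.mem_iff_swap_swap_mem_insert_insert_sdiff {α : Type*} [DecidableEq α] {E : Set α}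
    {a a' b b' : α}
    (ha : a ∈ E) (hb : b ∈ E) (ha' : a' ∉ E) (hb' : b' ∉ E) (hab : a ≠ b) (hab' : a' ≠ b')
    (y : α) :
    y ∈ E ↔ Equiv.swap b b' (Equiv.swap a a' y) ∈ insert a' (insert b' (E \ {a, b})) := by
  simp only [Equiv.swap_apply_def, Set.mem_insert_iff, Set.mem_sdiff, Set.mem_singleton_iff]
  split_ifs <;> grind

namespace SimpleGraph

variable {V W : Type*}

theorem exists_walk_map_length_le {G : SimpleGraph V} {G' : SimpleGraph W} (χ : V → W)
    (hχ : ∀ a b, G.Adj a b → χ a = χ b ∨ G'.Adj (χ a) (χ b)) {u w : V} (p : G.Walk u w) :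
    ∃ q : G'.Walk (χ u) (χ w), q.length ≤ p.length := by
  induction p with
  | nil => exact ⟨.nil, le_rfl⟩
  | cons h p ih =>
    obtain ⟨q, hq⟩ := ih
    rcases hχ _ _ h with heq | hadj
    · exact ⟨q.copy heq.symm rfl, by simp only [Walk.length_copy, Walk.length_cons]; omega⟩
    · exact ⟨.cons hadj q, by simpa using hq⟩

theorem dist_map_le {G : SimpleGraph V} {G' : SimpleGraph W} (χ : V → W)
    (hχ : ∀ a b, G.Adj a b → χ a = χ b ∨ G'.Adj (χ a) (χ b)) {u w : V} (h : G.Reachable u w) :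
    G'.dist (χ u) (χ w) ≤ G.dist u w := by
  obtain ⟨p, hp⟩ := h.exists_walk_length_eq_dist
  obtain ⟨q, hq⟩ := exists_walk_map_length_le χ hχ p
  exact (dist_le q).trans (hp ▸ hq)

end SimpleGraph

section EdgeDistance

variable {V W : Type*}

theorem eDist_of_ne (G : SimpleGraph V) {e f : Sym2 V} (h : e ≠ f) :
    eDist G e f = sInf {n : ℕ | ∃ u ∈ e, ∃ w ∈ f, G.dist u w = n} + 1 := if_neg h

theorem exists_mem_mem_dist_eq_sInf (G : SimpleGraph V) (e f : Sym2 V) :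
    ∃ u ∈ e, ∃ w ∈ f, G.dist u w = sInf {n : ℕ | ∃ u ∈ e, ∃ w ∈ f, G.dist u w = n} :=
  Nat.sInf_mem (s := {n : ℕ | ∃ u ∈ e, ∃ w ∈ f, G.dist u w = n})
    ⟨_, _, Sym2.out_fst_mem e, _, Sym2.out_fst_mem f, rfl⟩

theorem eDist_comm (G : SimpleGraph V) (e f : Sym2 V) : eDist G e f = eDist G f e := by
  by_cases h : e = f
  · rw [h]
  · rw [eDist_of_ne G h, eDist_of_ne G (Ne.symm h)]
    congr 2
    ext n
    constructor <;> rintro ⟨u, hu, w, hw, rfl⟩ <;> exact ⟨w, hw, u, hu, dist_comm⟩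

theorem eDist_le_one_of_mem_of_mem (G : SimpleGraph V) {e f : Sym2 V} {x : V}
    (he : x ∈ e) (hf : x ∈ f) : eDist G e f ≤ 1 := by
  by_cases h : e = f
  · simp [eDist, h]
  · have : sInf {n : ℕ | ∃ u ∈ e, ∃ w ∈ f, G.dist u w = n} ≤ 0 :=
      Nat.sInf_le ⟨x, he, x, hf, dist_self⟩
    rw [eDist_of_ne G h]
    omega

theorem two_le_eDist {G : SimpleGraph V} (hG : G.Connected) {e f : Sym2 V}
    (hdisj : ∀ u ∈ e, ∀ w ∈ f, u ≠ w) : 2 ≤ eDist G e f := by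
  have hef : e ≠ f := by
    rintro rfl
    exact hdisj _ (Sym2.out_fst_mem e) _ (Sym2.out_fst_mem e) rfl
  obtain ⟨u, hu, w, hw, hd⟩ := exists_mem_mem_dist_eq_sInf G e f
  rw [eDist_of_ne G hef, ← hd]
  have := hG.pos_dist_of_ne (hdisj u hu w hw)
  omega

theorem eDist_map_le {G : SimpleGraph V} {G' : SimpleGraph W} (χ : V → W) (φ : Sym2 V → Sym2 W)
    (hχ : ∀ u w, G'.dist (χ u) (χ w) ≤ G.dist u w) {e f : Sym2 V}
    (he : ∀ u ∈ e, χ u ∈ φ e) (hf : ∀ u ∈ f, χ u ∈ φ f) :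
    eDist G' (φ e) (φ f) ≤ eDist G e f := by
  by_cases hef : e = f
  · simp [eDist, hef]
  by_cases hφ : φ e = φ f
  · simp [eDist, hφ]
  obtain ⟨u, hu, w, hw, hd⟩ := exists_mem_mem_dist_eq_sInf G e f
  rw [eDist_of_ne G hef, eDist_of_ne G' hφ, ← hd, Nat.add_le_add_iff_right]
  refine le_trans (Nat.sInf_le ?_) (hχ u w)
  exact ⟨χ u, he u hu, χ w, hf w hw, rfl⟩

/-- Both double sums in `edgeWiener` count every pair twice, so one strictly shorter pair
lowers the double sum by at least two and survives the halving. -/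
theorem edgeWiener_lt_of_equiv [Fintype V] [Fintype W] {G : SimpleGraph V} {G' : SimpleGraph W}
    (φ : Sym2 V ≃ Sym2 W) (hφ : ∀ e, e ∈ G.edgeSet ↔ φ e ∈ G'.edgeSet)
    (hle : ∀ e ∈ G.edgeSet, ∀ f ∈ G.edgeSet, eDist G' (φ e) (φ f) ≤ eDist G e f)
    {e₀ f₀ : Sym2 V} (he₀ : e₀ ∈ G.edgeSet) (hf₀ : f₀ ∈ G.edgeSet)
    (hlt : eDist G' (φ e₀) (φ f₀) < eDist G e₀ f₀) :
    edgeWiener G' < edgeWiener G := by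
  have hφF : ∀ e, e ∈ G.edgeFinset ↔ φ e ∈ G'.edgeFinset := by simpa using hφ
  have hreindex : ∑ e ∈ G'.edgeFinset, ∑ f ∈ G'.edgeFinset, eDist G' e f =
      ∑ e ∈ G.edgeFinset, ∑ f ∈ G.edgeFinset, eDist G' (φ e) (φ f) :=
    (sum_equiv φ hφF fun _ _ => sum_equiv φ hφF fun _ _ => rfl).symm
  have hne : e₀ ≠ f₀ := by
    rintro rfl
    simp [eDist] at hlt
  have hrow : ∀ e ∈ G.edgeFinset,
      ∑ f ∈ G.edgeFinset, eDist G' (φ e) (φ f) ≤ ∑ f ∈ G.edgeFinset, eDist G e f :=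
    fun e he => sum_le_sum fun f hf => hle e (mem_edgeFinset.1 he) f (mem_edgeFinset.1 hf)
  have hrow_lt : ∀ e ∈ G.edgeSet, ∀ f ∈ G.edgeSet, eDist G' (φ e) (φ f) < eDist G e f →
      ∑ g ∈ G.edgeFinset, eDist G' (φ e) (φ g) < ∑ g ∈ G.edgeFinset, eDist G e g :=
    fun e he f hf h => sum_lt_sum (fun g hg => hle e he g (mem_edgeFinset.1 hg))
      ⟨f, mem_edgeFinset.2 hf, h⟩
  have := sum_add_two_le_sum hrow (mem_edgeFinset.2 he₀) (mem_edgeFinset.2 hf₀) hne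
    (hrow_lt e₀ he₀ f₀ hf₀ hlt)
    (hrow_lt f₀ hf₀ e₀ he₀ (by rwa [eDist_comm G, eDist_comm G']))
  unfold edgeWiener
  omega

end EdgeDistance

namespace SimpleGraph

variable {V : Type*}

/-- Shaped exactly like `G'` in `stmt4`, with `x, p, q, p', q'` standing for
`v 0, v 1, v 2, v (r - 1), v (r - 2)`. -/
def reroute (G : SimpleGraph V) (x p q p' q' : V) : SimpleGraph V :=
  fromRel fun a b =>
    (G.Adj a b ∧ s(a, b) ≠ s(q', p') ∧ s(a, b) ≠ s(p, q)) ∨ (a = q' ∧ b = x) ∨ (a = q ∧ b = x)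

noncomputable def collapse (x p p' : V) (u : V) : V := if u = p ∨ u = p' then x else u

noncomputable def rerouteEquiv (x p q p' q' : V) : Equiv.Perm (Sym2 V) :=
  (Equiv.swap s(p, q) s(x, q)).trans (Equiv.swap s(p', q') s(x, q'))

variable {G : SimpleGraph V} {x p q p' q' : V}

theorem edgeSet_reroute (hxq : x ≠ q) (hxq' : x ≠ q') :
    (G.reroute x p q p' q').edgeSet =
      insert s(x, q) (insert s(x, q') (G.edgeSet \ {s(p, q), s(p', q')})) := by
  ext e
  induction e with | h a b =>
  simp only [reroute, mem_edgeSet, fromRel_adj, Set.mem_insert_iff, Set.mem_sdiff,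
    Set.mem_singleton_iff, ne_eq, Sym2.eq_iff]
  have := G.adj_comm a b
  have : G.Adj a b → a ≠ b := G.ne_of_adj
  grind

theorem reroute_adj (hxq : x ≠ q) (hxq' : x ≠ q') {a b : V} :
    (G.reroute x p q p' q').Adj a b ↔ s(a, b) = s(x, q) ∨ s(a, b) = s(x, q') ∨
      (G.Adj a b ∧ s(a, b) ≠ s(p, q) ∧ s(a, b) ≠ s(p', q')) := by
  rw [← mem_edgeSet, edgeSet_reroute hxq hxq']
  simp

/-- Edges at `p` or `p'` become the loop at `x` or one of the new edges `xq`, `xq'`;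
all other edges survive in the rerouted graph. -/
theorem collapse_eq_or_reroute_adj (hxq : x ≠ q) (hxq' : x ≠ q')
    (hp : ∀ w, G.Adj p w → w = x ∨ w = q) (hp' : ∀ w, G.Adj p' w → w = x ∨ w = q')
    {a b : V} (hab : G.Adj a b) :
    collapse x p p' a = collapse x p p' b ∨
      (G.reroute x p q p' q').Adj (collapse x p p' a) (collapse x p p' b) := by
  have := hab.symm
  simp only [reroute_adj hxq hxq', collapse]
  split_ifs <;> grind

theorem collapse_mem_rerouteEquiv (hp : ∀ w, G.Adj p w → w = x ∨ w = q)
    (hp' : ∀ w, G.Adj p' w → w = x ∨ w = q') (hxq : ¬G.Adj x q) (hxq' : ¬G.Adj x q')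
    (hqq' : q ≠ q') {e : Sym2 V} (he : e ∈ G.edgeSet) {u : V} (hu : u ∈ e) :
    collapse x p p' u ∈ rerouteEquiv x p q p' q' e := by
  induction e with | h a b =>
  rw [mem_edgeSet] at he
  have := he.symm
  simp only [rerouteEquiv, collapse, Equiv.trans_apply, Equiv.swap_apply_def, Sym2.mem_iff]
    at hu ⊢
  split_ifs <;> grind

theorem edgeWiener_reroute_lt [Fintype V] (hG : G.Connected)
    (hp : ∀ w, G.Adj p w → w = x ∨ w = q) (hp' : ∀ w, G.Adj p' w → w = x ∨ w = q')
    (hpq : G.Adj p q) (hpq' : G.Adj p' q') (hxq : ¬G.Adj x q) (hxq' : ¬G.Adj x q')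
    (hxq_ne : x ≠ q) (hxq'_ne : x ≠ q') (hpp' : p ≠ p') (hpq'_ne : p ≠ q') (hqp' : q ≠ p')
    (hqq' : q ≠ q') :
    edgeWiener (G.reroute x p q p' q') < edgeWiener G := by
  have hpq_mem : s(p, q) ∈ G.edgeSet := hpq
  have hpq'_mem : s(p', q') ∈ G.edgeSet := hpq'
  refine edgeWiener_lt_of_equiv (rerouteEquiv x p q p' q') (fun e => ?_)
    (fun e he f hf => eDist_map_le (collapse x p p') _ (fun u w => ?_)
      (fun u hu => collapse_mem_rerouteEquiv hp hp' hxq hxq' hqq' he hu)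
      (fun u hu => collapse_mem_rerouteEquiv hp hp' hxq hxq' hqq' hf hu))
    hpq_mem hpq'_mem ?_
  · rw [edgeSet_reroute hxq_ne hxq'_ne, rerouteEquiv, Equiv.trans_apply]
    exact Set.mem_iff_swap_swap_mem_insert_insert_sdiff hpq_mem hpq'_mem
      (show s(x, q) ∉ G.edgeSet from hxq) (show s(x, q') ∉ G.edgeSet from hxq')
      (by simp [hpp', hpq'_ne]) (by simp [hqq', hxq_ne.symm]) e
  · exact dist_map_le _ (fun a b => collapse_eq_or_reroute_adj hxq_ne hxq'_ne hp hp') (hG u w)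
  · have hx_mem : ∀ {u v}, G.Adj u v → (u = p ∨ u = p') →
        x ∈ rerouteEquiv x p q p' q' s(u, v) := fun huv hu => by
      simpa [collapse, hu] using collapse_mem_rerouteEquiv hp hp' hxq hxq' hqq'
        (G.mem_edgeSet.2 huv) (Sym2.mem_mk_left _ _)
    calc _ ≤ 1 := eDist_le_one_of_mem_of_mem _ (hx_mem hpq (.inl rfl)) (hx_mem hpq' (.inr rfl))
      _ < 2 := one_lt_two
      _ ≤ eDist G s(p, q) s(p', q') := two_le_eDist hG (by
        simp only [Sym2.mem_iff]
        rintro u (rfl | rfl) w (rfl | rfl) <;> assumption)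

end SimpleGraph

theorem eq_or_eq_of_adj_of_succ_lt {V : Type*} {G : SimpleGraph V} {r : ℕ} {v : ℕ → V}
    (hclosed : ∀ i, 1 ≤ i → i < r → ∀ w, G.Adj (v i) w →
      w = v ((i + 1) % r) ∨ w = v ((i + r - 1) % r))
    {i : ℕ} (h1 : 1 ≤ i) (h2 : i + 1 < r) {w : V} (hw : G.Adj (v i) w) :
    w = v (i + 1) ∨ w = v (i - 1) := by
  have := hclosed i h1 (by omega) w hw
  rwa [Nat.mod_eq_of_lt h2, show i + r - 1 = i - 1 + r by omega, Nat.add_mod_right,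
    Nat.mod_eq_of_lt (by omega)] at this

theorem stmt4 {V : Type*} [Fintype V] (r : ℕ) (hr : 5 ≤ r)
    (G : SimpleGraph V) (hconn : G.Connected)
    (v : ℕ → V)
    (hinj : ∀ i < r, ∀ j < r, v i = v j → i = j)
    (hcyc : ∀ i < r, G.Adj (v i) (v ((i + 1) % r)))
    (hclosed : ∀ i, 1 ≤ i → i < r → ∀ w, G.Adj (v i) w →
      w = v ((i + 1) % r) ∨ w = v ((i + r - 1) % r))
    (G' : SimpleGraph V)
    (hG' : G' = SimpleGraph.fromRel (fun a b =>
        (G.Adj a b ∧ s(a, b) ≠ s(v (r - 2), v (r - 1)) ∧ s(a, b) ≠ s(v 1, v 2)) ∨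
        (a = v (r - 2) ∧ b = v 0) ∨ (a = v 2 ∧ b = v 0))) :
    edgeWiener G' < edgeWiener G := by
  have hne : ∀ i < r, ∀ j < r, i ≠ j → v i ≠ v j := fun i hi j hj hij h => hij (hinj i hi j hj h)
  have hp : ∀ w, G.Adj (v 1) w → w = v 0 ∨ w = v 2 := fun w hw =>
    (eq_or_eq_of_adj_of_succ_lt hclosed le_rfl (by omega) hw).symm
  have hp' : ∀ w, G.Adj (v (r - 1)) w → w = v 0 ∨ w = v (r - 2) := fun w hw => by
    have := hclosed (r - 1) (by omega) (by omega) w hw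
    rwa [Nat.sub_add_cancel (by omega), Nat.mod_self, show r - 1 + r - 1 = r - 2 + r by omega,
      Nat.add_mod_right, Nat.mod_eq_of_lt (by omega)] at this
  have hpq : G.Adj (v 1) (v 2) := by
    simpa [Nat.mod_eq_of_lt (show 2 < r by omega)] using hcyc 1 (by omega)
  have hpq' : G.Adj (v (r - 1)) (v (r - 2)) := by
    have := hcyc (r - 2) (by omega)
    rw [show r - 2 + 1 = r - 1 by omega, Nat.mod_eq_of_lt (by omega)] at this
    exact this.symm
  have hxq : ¬G.Adj (v 0) (v 2) := fun h =>
    (eq_or_eq_of_adj_of_succ_lt hclosed (i := 2) (by omega) (by omega) h.symm).elim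
      (hne 0 (by omega) 3 (by omega) (by omega)) (hne 0 (by omega) 1 (by omega) (by omega))
  have hxq' : ¬G.Adj (v 0) (v (r - 2)) := fun h =>
    (eq_or_eq_of_adj_of_succ_lt hclosed (i := r - 2) (by omega) (by omega) h.symm).elim
      (hne 0 (by omega) _ (by omega) (by omega)) (hne 0 (by omega) _ (by omega) (by omega))
  subst hG'
  exact edgeWiener_reroute_lt hconn hp hp' hpq hpq' hxq hxq'
    (hne _ (by omega) _ (by omega) (by omega)) (hne _ (by omega) _ (by omega) (by omega))
    (hne _ (by omega) _ (by omega) (by omega)) (hne _ (by omega) _ (by omega) (by omega))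
    (hne _ (by omega) _ (by omega) (by omega)) (hne _ (by omega) _ (by omega) (by omega))
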